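/- For all real numbers t and s, lim_{k→∞} C_k · k^t · η_k^{2k+s} = 0. -/

import Mathlib

open Filter Set

/-- `C_k = (2k-2)!/(k-1)!` as a real number. -/
noncomputable def Cc (k : ℕ) : ℝ :=
  ((2 * k - 2).factorial : ℝ) / ((k - 1).factorial : ℝ)

/-- `p_k(z) = 1 − 2z − (7+8k)z²`. -/
noncomputable def Pp (k : ℕ) (z : ℝ) : ℝ := 1 - 2 * z - (7 + 8 * k) * z ^ 2

/-- `h_k(z) = 1 − z − C_k·z^{2k+1}`. -/
noncomputable def Hh (k : ℕ) (z : ℝ) : ℝ := 1 - z - Cc k * z ^ (2 * k + 1)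

/-- `Δ_k(z) = p_k(z) + 4·C_k·z^{2k+1}·h_k(z)`. -/
noncomputable def Dd (k : ℕ) (z : ℝ) : ℝ :=
  Pp k z + 4 * Cc k * z ^ (2 * k + 1) * Hh k z

/-- `g_k(z) = 2 − C_k·z^{2k−1}·(h_k(z) − C_k·z^{2k−1})`. -/
noncomputable def Gg (k : ℕ) (z : ℝ) : ℝ :=
  2 - Cc k * z ^ (2 * k - 1) * (Hh k z - Cc k * z ^ (2 * k - 1))

/-- `ρ_k = 1/(1+√(8+8k))`, the positive root of `p_k`. -/
noncomputable def rho (k : ℕ) : ℝ := 1 / (1 + Real.sqrt (8 + 8 * k))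

/-- `ψ_k(x) = −x·Δ_k′(x)`. -/
noncomputable def psi (k : ℕ) (x : ℝ) : ℝ := -x * deriv (Dd k) x

/-- `η` is a root of `Δ_k` in the interval `(0, 1/√(8+8k))`, and is the unique such root. -/
def IsEta (k : ℕ) (η : ℝ) : Prop :=
  η ∈ Set.Ioo (0 : ℝ) (1 / Real.sqrt (8 + 8 * k)) ∧ Dd k η = 0 ∧
    ∀ x ∈ Set.Ioo (0 : ℝ) (1 / Real.sqrt (8 + 8 * k)), Dd k x = 0 → x = η

/-! Since `C_k = (2k-2)!/(k-1)!` is a descending factorial, `C_k ≤ (2k)^k`, while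
`η_k² < 1/(8k)`. Hence `C_k η_k^{2k+s} ≤ (8k)^{-s/2} 4^{-k}` once `2k + s ≥ 0`, and the
geometric factor `4^{-k}` beats the polynomial factor `k^t (8k)^{-s/2}`. -/

open Real

lemma tendsto_natCast_rpow_mul_pow_of_lt_one (r : ℝ) {a : ℝ} (ha₀ : 0 < a) (ha₁ : a < 1) :
    Tendsto (fun k : ℕ => (k : ℝ) ^ r * a ^ k) atTop (nhds 0) := by
  have h := (tendsto_rpow_mul_exp_neg_mul_atTop_nhds_zero r (-log a)
    (neg_pos.mpr (log_neg ha₀ ha₁))).comp tendsto_natCast_atTop_atTop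
  refine h.congr fun k => ?_
  simp [Function.comp, exp_mul, exp_log ha₀]

lemma Cc_eq_descFactorial (k : ℕ) : Cc k = (2 * k - 2).descFactorial (k - 1) := by
  have h := Nat.factorial_mul_descFactorial (show k - 1 ≤ 2 * k - 2 by omega)
  rw [show 2 * k - 2 - (k - 1) = k - 1 by omega] at h
  rw [Cc, ← h, Nat.cast_mul, mul_div_cancel_left₀ _ (by positivity)]

lemma Cc_nonneg (k : ℕ) : 0 ≤ Cc k := by
  unfold Cc; positivity

lemma Cc_le_pow (k : ℕ) : Cc k ≤ (2 * k : ℝ) ^ k := by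
  rcases Nat.eq_zero_or_pos k with rfl | hk
  · simp [Cc]
  have h : (2 * k - 2).descFactorial (k - 1) ≤ (2 * k) ^ k :=
    calc (2 * k - 2).descFactorial (k - 1) ≤ (2 * k - 2) ^ (k - 1) := Nat.descFactorial_le_pow _ _
      _ ≤ (2 * k) ^ (k - 1) := Nat.pow_le_pow_left (by omega) _
      _ ≤ (2 * k) ^ k := Nat.pow_le_pow_right (by omega) (by omega)
  rw [Cc_eq_descFactorial]
  exact_mod_cast h

lemma sq_le_of_mem_Ioo {k : ℕ} (hk : 0 < k) {x : ℝ} (hx : x ∈ Ioo 0 (1 / √(8 + 8 * k))) :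
    x ^ 2 ≤ 1 / (8 * k) := by
  have h8 : (0 : ℝ) < 8 + 8 * k := by positivity
  calc x ^ 2 ≤ (1 / √(8 + 8 * k)) ^ 2 := pow_le_pow_left₀ hx.1.le hx.2.le 2
    _ = 1 / (8 + 8 * k) := by rw [div_pow, one_pow, sq_sqrt h8.le]
    _ ≤ 1 / (8 * k) := one_div_le_one_div_of_le (by positivity) (by linarith)

lemma Cc_mul_rpow_le {k : ℕ} (hk : 0 < k) {x : ℝ} (hx₀ : 0 ≤ x) (hx : x ^ 2 ≤ 1 / (8 * k))
    {s : ℝ} (hs : 0 ≤ 2 * k + s) :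
    Cc k * x ^ (2 * (k : ℝ) + s) ≤ (8 * k : ℝ) ^ (-s / 2) * (1 / 4) ^ k := by
  have h8k : (0 : ℝ) < 8 * k := by positivity
  have hpow : x ^ (2 * (k : ℝ) + s) ≤ (8 * k : ℝ) ^ (-s / 2) * ((8 * k : ℝ) ^ k)⁻¹ := by
    calc x ^ (2 * (k : ℝ) + s) = (x ^ 2) ^ ((k : ℝ) + s / 2) := by
          rw [← rpow_natCast, ← rpow_mul hx₀]; push_cast; ring_nf
      _ ≤ (1 / (8 * k)) ^ ((k : ℝ) + s / 2) := rpow_le_rpow (by positivity) hx (by linarith)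
      _ = (8 * k : ℝ) ^ (-s / 2) * ((8 * k : ℝ) ^ k)⁻¹ := by
          rw [one_div, inv_rpow h8k.le, ← rpow_neg h8k.le, neg_add, rpow_add h8k,
            rpow_neg h8k.le, rpow_natCast]
          ring_nf
  calc Cc k * x ^ (2 * (k : ℝ) + s)
      ≤ (2 * k : ℝ) ^ k * ((8 * k : ℝ) ^ (-s / 2) * ((8 * k : ℝ) ^ k)⁻¹) :=
        mul_le_mul (Cc_le_pow k) hpow (by positivity) (by positivity)
    _ = (8 * k : ℝ) ^ (-s / 2) * (1 / 4) ^ k := by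
        rw [show (1 / 4 : ℝ) = 2 * k / (8 * k) by field_simp; norm_num, div_pow]
        ring

/-- For all real numbers `t` and `s`, `lim_{k→∞} C_k·k^t·η_k^{2k+s} = 0`,
where `η_k` is the unique root of `Δ_k` in the real interval `(0, 1/√(8+8k))`. -/
theorem statement9 (η : ℕ → ℝ) (hη : ∀ k, 2 ≤ k → IsEta k (η k)) (t s : ℝ) :
    Tendsto (fun k : ℕ => Cc k * (k : ℝ) ^ t * η k ^ (2 * (k : ℝ) + s))
      atTop (nhds 0) := by
  have hlim := (tendsto_natCast_rpow_mul_pow_of_lt_one (t - s / 2) (a := 1 / 4)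
    (by norm_num) (by norm_num)).const_mul ((8 : ℝ) ^ (-s / 2))
  rw [mul_zero] at hlim
  refine squeeze_zero' ?_ ?_ hlim
  · filter_upwards [eventually_ge_atTop 2] with k hk
    have hx := (hη k hk).1
    exact mul_nonneg (mul_nonneg (Cc_nonneg k) (rpow_nonneg k.cast_nonneg t))
      (rpow_nonneg hx.1.le _)
  · filter_upwards [eventually_ge_atTop 2, eventually_ge_atTop ⌈-s / 2⌉₊] with k hk hks
    have hx := (hη k hk).1
    have hk₀ : (0 : ℝ) < k := by positivity
    have hs : 0 ≤ 2 * (k : ℝ) + s := by linarith [Nat.ceil_le.mp hks]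
    calc Cc k * (k : ℝ) ^ t * η k ^ (2 * (k : ℝ) + s)
        = (k : ℝ) ^ t * (Cc k * η k ^ (2 * (k : ℝ) + s)) := by ring
      _ ≤ (k : ℝ) ^ t * ((8 * k : ℝ) ^ (-s / 2) * (1 / 4) ^ k) :=
          mul_le_mul_of_nonneg_left
            (Cc_mul_rpow_le (by omega) hx.1.le (sq_le_of_mem_Ioo (by omega) hx) hs)
            (rpow_nonneg hk₀.le t)
      _ = (8 : ℝ) ^ (-s / 2) * ((k : ℝ) ^ (t - s / 2) * (1 / 4) ^ k) := by
          rw [mul_rpow (by norm_num) hk₀.le, sub_eq_add_neg, rpow_add hk₀, neg_div]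
          ring
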